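/- arXiv:2105.02131 — 3 statements merged into one kernel-verified Lean document; each statement's English description precedes it below -/
import Mathlib

section
/- If T is a bounded linear operator on a Banach space with p(T) = q(T) = p < ∞, then X = ker(Tᵖ) ⊕ range(Tᵖ), and in particular range(Tᵖ) is closed. -/
open Filter Set
open LinearMap (ker)

variable {X Y : Type*} [NormedAddCommGroup X] [NormedSpace ℂ X]
  [NormedAddCommGroup Y] [NormedSpace ℂ Y]

/-- `T` has the single-valued extension property at `l0`. -/
def HasSVEPAt (T : X →L[ℂ] X) (l0 : ℂ) : Prop :=
  ∀ U : Set ℂ, IsOpen U → l0 ∈ U → ∀ f : ℂ → X, AnalyticOnNhd ℂ f U →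
    (∀ μ ∈ U, (T - μ • (1 : X →L[ℂ] X)) (f μ) = 0) → ∀ μ ∈ U, f μ = 0

/-- Fredholm: finite-dimensional kernel, closed range of finite codimension. -/
def IsFredholmOp (T : X →L[ℂ] X) : Prop :=
  FiniteDimensional ℂ (ker (T : X →ₗ[ℂ] X)) ∧ IsClosed ((LinearMap.range (T : X →ₗ[ℂ] X) : Submodule ℂ X) : Set X) ∧
    FiniteDimensional ℂ (X ⧸ LinearMap.range (T : X →ₗ[ℂ] X))

/-- finite ascent -/
def FiniteAscent (T : X →L[ℂ] X) : Prop := ∃ n : ℕ, ker ((T ^ n : X →L[ℂ] X) : X →ₗ[ℂ] X) = ker ((T ^ (n + 1) : X →L[ℂ] X) : X →ₗ[ℂ] X)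

/-- finite descent -/
def FiniteDescent (T : X →L[ℂ] X) : Prop :=
  ∃ n : ℕ, LinearMap.range ((T ^ n : X →L[ℂ] X) : X →ₗ[ℂ] X) = LinearMap.range ((T ^ (n + 1) : X →L[ℂ] X) : X →ₗ[ℂ] X)

/-- essential spectrum -/
def essSpec (T : X →L[ℂ] X) : Set ℂ := {l | ¬ IsFredholmOp (T - l • 1)}

/-- Browder spectrum -/
def browderSpec (T : X →L[ℂ] X) : Set ℂ :=
  {l | ¬ (IsFredholmOp (T - l • 1) ∧ FiniteAscent (T - l • 1) ∧ FiniteDescent (T - l • 1))}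

/-- the Banach-space dual (adjoint) operator -/
noncomputable def dualOp (T : X →L[ℂ] X) :
    StrongDual ℂ X →L[ℂ] StrongDual ℂ X :=
  (ContinuousLinearMap.compSL X X ℂ (RingHom.id ℂ) (RingHom.id ℂ)).flip T

/-!
Once the kernels and ranges of the powers of `T` stabilise at `p` they stay constant, so
`ker T^(2p) = ker T^p` and `range T^(2p) = range T^p`; these two equalities say exactly that
`ker T^p` and `range T^p` are disjoint and span `X` (Fitting's decomposition). A range with a closed
algebraic complement is closed, by the open mapping theorem.
-/

namespace Module.End

variable {R M : Type*} [Ring R] [AddCommGroup M] [Module R M] {f : End R M} {n : ℕ}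

theorem ker_pow_add_eq_of_ker_pow_eq_ker_pow_succ (h : ker (f ^ n) = ker (f ^ (n + 1))) :
    ∀ m, ker (f ^ (n + m)) = ker (f ^ n)
  | 0 => rfl
  | m + 1 => by
    rw [← add_assoc, pow_succ, mul_eq_comp, LinearMap.ker_comp,
      ker_pow_add_eq_of_ker_pow_eq_ker_pow_succ h m, ← LinearMap.ker_comp, ← mul_eq_comp,
      ← pow_succ, h]

theorem range_pow_add_eq_of_range_pow_eq_range_pow_succ
    (h : LinearMap.range (f ^ n) = LinearMap.range (f ^ (n + 1))) :
    ∀ m, LinearMap.range (f ^ (n + m)) = LinearMap.range (f ^ n)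
  | 0 => rfl
  | m + 1 => by
    rw [← add_assoc, pow_succ', mul_eq_comp, LinearMap.range_comp,
      range_pow_add_eq_of_range_pow_eq_range_pow_succ h m, ← LinearMap.range_comp,
      ← mul_eq_comp, ← pow_succ', h]

theorem isCompl_ker_pow_range_pow (hker : ker (f ^ n) = ker (f ^ (n + 1)))
    (hrange : LinearMap.range (f ^ n) = LinearMap.range (f ^ (n + 1))) :
    IsCompl (ker (f ^ n)) (LinearMap.range (f ^ n)) := by
  have hker₂ := ker_pow_add_eq_of_ker_pow_eq_ker_pow_succ hker n
  have hrange₂ := range_pow_add_eq_of_range_pow_eq_range_pow_succ hrange n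
  constructor
  · rw [Submodule.disjoint_def]
    rintro - hx ⟨y, rfl⟩
    have hy : y ∈ ker (f ^ (n + n)) := by rwa [LinearMap.mem_ker, pow_add, mul_apply]
    rwa [hker₂] at hy
  · rw [codisjoint_iff, Submodule.eq_top_iff']
    intro x
    obtain ⟨y, hy⟩ : (f ^ n) x ∈ LinearMap.range (f ^ (n + n)) :=
      hrange₂ ▸ LinearMap.mem_range_self _ x
    rw [pow_add, mul_apply] at hy
    refine Submodule.mem_sup.mpr ⟨x - (f ^ n) y, ?_, (f ^ n) y, LinearMap.mem_range_self _ y,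
      sub_add_cancel x _⟩
    rw [LinearMap.mem_ker, map_sub, hy, sub_self]

end Module.End

namespace ContinuousLinearMap

variable {𝕜 E F : Type*} [NontriviallyNormedField 𝕜] [NormedAddCommGroup E] [NormedSpace 𝕜 E]
  [CompleteSpace E] [NormedAddCommGroup F] [NormedSpace 𝕜 F] [CompleteSpace F]

/-- The map `(x, g) ↦ f x + g` from `E × G` onto `F` is a quotient map by the open mapping
theorem, and the preimage of `range f` under it is the closed set `E × {0}`. -/
theorem isClosed_range_of_isCompl {f : E →L[𝕜] F} {G : Submodule 𝕜 F}
    (h : IsCompl f.range G) (hG : IsClosed (G : Set F)) : IsClosed (f.range : Set F) := by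
  have : CompleteSpace G := hG.completeSpace_coe
  set ψ : E × G →L[𝕜] F := f.coprod G.subtypeL
  have hsurj : Function.Surjective ψ := by
    rw [← coe_coe, ← LinearMap.range_eq_top, coe_coprod, LinearMap.range_coprod]
    simpa using h.sup_eq_top
  have hpre : ψ ⁻¹' f.range = Prod.snd ⁻¹' {0} := by
    ext ⟨x, g⟩
    simp only [mem_preimage, SetLike.mem_coe, mem_singleton_iff, ψ, coprod_apply,
      Submodule.subtypeL_apply]
    constructor
    · intro hg
      have hgf : (g : F) ∈ f.range := by
        simpa using Submodule.sub_mem _ hg (LinearMap.mem_range_self (f : E →ₗ[𝕜] F) x)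
      exact Subtype.ext (Submodule.disjoint_def.mp h.disjoint.symm g g.2 hgf)
    · rintro rfl
      simp
  have hquot := (ψ.isOpenMap hsurj).isQuotientMap ψ.continuous hsurj
  rw [← hquot.isClosed_preimage, hpre]
  exact isClosed_singleton.preimage continuous_snd

end ContinuousLinearMap

/-- If `p(T) = q(T) = p < ∞`, then `X = ker (T ^ p) ⊕ range (T ^ p)`, and in
particular `range (T ^ p)` is closed. -/
theorem stmt_5 [CompleteSpace X] (T : X →L[ℂ] X) (p : ℕ)
    (hp : IsLeast {n : ℕ | ker ((T ^ n : X →L[ℂ] X) : X →ₗ[ℂ] X) = ker ((T ^ (n + 1) : X →L[ℂ] X) : X →ₗ[ℂ] X)} p)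
    (hq : IsLeast {n : ℕ | LinearMap.range ((T ^ n : X →L[ℂ] X) : X →ₗ[ℂ] X) = LinearMap.range ((T ^ (n + 1) : X →L[ℂ] X) : X →ₗ[ℂ] X)} p) :
    IsCompl (ker ((T ^ p : X →L[ℂ] X) : X →ₗ[ℂ] X)) (LinearMap.range ((T ^ p : X →L[ℂ] X) : X →ₗ[ℂ] X)) ∧
      IsClosed ((LinearMap.range ((T ^ p : X →L[ℂ] X) : X →ₗ[ℂ] X) : Submodule ℂ X) : Set X) := by
  have hcompl : IsCompl (ker ((T ^ p : X →L[ℂ] X) : X →ₗ[ℂ] X))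
      (LinearMap.range ((T ^ p : X →L[ℂ] X) : X →ₗ[ℂ] X)) := by
    simp only [ContinuousLinearMap.toLinearMap_pow] at hp hq ⊢
    exact Module.End.isCompl_ker_pow_range_pow hp.1 hq.1
  exact ⟨hcompl, ContinuousLinearMap.isClosed_range_of_isCompl hcompl.symm (T ^ p).isClosed_ker⟩
end

section
/- Let T be a bounded operator on a Banach space X. If both T and its dual T* have the SVEP on the complement of the essential spectrum σₑ(T), then σₑ(T) = σ_b(T), i.e., T ∈ (Bₑ). -/
/-!
Let `S = T - λ` be Fredholm. Since `ker S` is finite-dimensional, the chain `ker S ⊓ range Sⁿ`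
stabilises; hence infinite ascent forces `ker S` to meet the hyperrange `⋂ₙ range Sⁿ`, and `S` maps
the hyperrange onto itself. The hyperrange is closed (each `range Sⁿ` has finite codimension), so
the open mapping theorem gives a backward orbit `S uₙ₊₁ = uₙ` of geometric growth starting at some
`u₀ ≠ 0` in `ker S`. Then `μ ↦ ∑ (μ - λ)ⁿ uₙ` is a nonzero analytic solution of `(T - μ) f(μ) = 0`,
contradicting SVEP: so SVEP of `T` gives finite ascent of `S`.

The dual `S*` again has finite-dimensional kernel and cokernel (the latter by the closed range of
`S` and Hahn–Banach), so SVEP of `T*` gives finite ascent of `S*`. By Hahn–Banach,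
`ker S*ⁿ⁺¹ = ker S*ⁿ` forces `range Sⁿ⁺¹ = range Sⁿ`, the ranges being closed.
-/

open Filter Set
open LinearMap (ker)

variable {X Y : Type*} [NormedAddCommGroup X] [NormedSpace ℂ X]
  [NormedAddCommGroup Y] [NormedSpace ℂ Y]

section LinearAlgebra
variable {R U V W : Type*} [Ring R] [AddCommGroup U] [Module R U] [AddCommGroup V] [Module R V]
  [AddCommGroup W] [Module R W]

theorem LinearMap.finite_quotient_range_comp (A : V →ₗ[R] W) (B : U →ₗ[R] V)
    [Module.Finite R (W ⧸ LinearMap.range A)] [Module.Finite R (V ⧸ LinearMap.range B)] :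
    Module.Finite R (W ⧸ LinearMap.range (A ∘ₗ B)) := by
  have hB : LinearMap.range B ≤ (LinearMap.range (A ∘ₗ B)).comap A := by
    rintro _ ⟨u, rfl⟩
    exact ⟨u, rfl⟩
  refine Module.Finite.of_exact (f := (LinearMap.range B).mapQ _ A hB)
    (g := Submodule.factor (LinearMap.range_comp_le_range B A)) ?_ (Submodule.factor_surjective _)
  intro w
  obtain ⟨w, rfl⟩ := Submodule.Quotient.mk_surjective _ w
  change Submodule.Quotient.mk w = 0 ↔ _
  rw [Submodule.Quotient.mk_eq_zero]
  constructor
  · rintro ⟨v, rfl⟩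
    exact ⟨Submodule.Quotient.mk v, rfl⟩
  · rintro ⟨v, hv⟩
    obtain ⟨v, rfl⟩ := Submodule.Quotient.mk_surjective _ v
    obtain ⟨u, hu⟩ := (Submodule.Quotient.eq _).mp hv
    exact ⟨v - B u, by rw [map_sub, ← LinearMap.comp_apply, hu, sub_sub_cancel]⟩

end LinearAlgebra

namespace Module.End
variable {R M : Type*} [Ring R] [AddCommGroup M] [Module R M] (f : Module.End R M)

def hyperrange : Submodule R M := ⨅ n : ℕ, LinearMap.range (f ^ n)

theorem range_pow_le_range_pow {m n : ℕ} (h : m ≤ n) :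
    LinearMap.range (f ^ n) ≤ LinearMap.range (f ^ m) :=
  f.iterateRange.monotone h

theorem hyperrange_le_range_pow (n : ℕ) : f.hyperrange ≤ LinearMap.range (f ^ n) :=
  iInf_le _ n

theorem apply_mem_hyperrange {x : M} (hx : x ∈ f.hyperrange) : f x ∈ f.hyperrange := by
  refine Submodule.mem_iInf _ |>.mpr fun n => f.range_pow_le_range_pow n.le_succ ?_
  obtain ⟨y, rfl⟩ := f.hyperrange_le_range_pow n hx
  exact ⟨y, by rw [pow_succ', Module.End.mul_apply]⟩

theorem ker_pow_succ_eq_of_disjoint {n : ℕ}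
    (h : Disjoint (LinearMap.ker f) (LinearMap.range (f ^ n))) :
    LinearMap.ker (f ^ (n + 1)) = LinearMap.ker (f ^ n) := by
  refine le_antisymm (fun x hx => ?_) (f.iterateKer.monotone n.le_succ)
  have hfx : (f ^ n) x ∈ LinearMap.ker f := by
    rwa [LinearMap.mem_ker, ← Module.End.mul_apply, ← pow_succ']
  exact h.le_bot ⟨hfx, x, rfl⟩

theorem finite_quotient_range_pow [Module.Finite R (M ⧸ LinearMap.range f)] (n : ℕ) :
    Module.Finite R (M ⧸ LinearMap.range (f ^ n)) := by
  induction n with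
  | zero => rw [pow_zero, Module.End.one_eq_id, LinearMap.range_id]; infer_instance
  | succ n ih =>
    rw [pow_succ, Module.End.mul_eq_comp]
    exact LinearMap.finite_quotient_range_comp _ _

variable [IsArtinian R (LinearMap.ker f)]

theorem exists_ker_inf_range_pow_eq : ∃ n₀, ∀ n, n₀ ≤ n →
    LinearMap.ker f ⊓ LinearMap.range (f ^ n) = LinearMap.ker f ⊓ LinearMap.range (f ^ n₀) := by
  obtain ⟨n₀, hn₀ : ∀ n, n₀ ≤ n → (LinearMap.range (f ^ n₀)).comap (LinearMap.ker f).subtype =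
      (LinearMap.range (f ^ n)).comap (LinearMap.ker f).subtype⟩ := IsArtinian.monotone_stabilizes
    ⟨fun n => OrderDual.toDual ((LinearMap.range (f ^ n)).comap (LinearMap.ker f).subtype),
      fun m n h => Submodule.comap_mono (f.range_pow_le_range_pow h)⟩
  refine ⟨n₀, fun n hn => ?_⟩
  have := congrArg (Submodule.map (LinearMap.ker f).subtype) (hn₀ n hn)
  rwa [Submodule.map_comap_subtype, Submodule.map_comap_subtype, eq_comm] at this

theorem ker_inf_hyperrange_ne_bot
    (h : ∀ n, LinearMap.ker (f ^ (n + 1)) ≠ LinearMap.ker (f ^ n)) :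
    LinearMap.ker f ⊓ f.hyperrange ≠ ⊥ := by
  obtain ⟨n₀, hn₀⟩ := f.exists_ker_inf_range_pow_eq
  have hle : LinearMap.ker f ⊓ LinearMap.range (f ^ n₀) ≤ f.hyperrange := by
    refine fun x hx => Submodule.mem_iInf _ |>.mpr fun n => ?_
    rcases le_total n n₀ with hn | hn
    · exact f.range_pow_le_range_pow hn hx.2
    · exact (hn₀ n hn ▸ hx).2
  intro hbot
  refine h n₀ (f.ker_pow_succ_eq_of_disjoint (disjoint_iff.mpr (le_bot_iff.mp ?_)))
  exact hbot ▸ le_inf inf_le_left hle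

theorem hyperrange_le_map_hyperrange : f.hyperrange ≤ f.hyperrange.map f := by
  obtain ⟨n₀, hn₀⟩ := f.exists_ker_inf_range_pow_eq
  intro y hy
  obtain ⟨z, rfl⟩ := f.hyperrange_le_range_pow (n₀ + 1) hy
  refine ⟨(f ^ n₀) z, Submodule.mem_iInf _ |>.mpr fun n => ?_, by
    rw [← Module.End.mul_apply, ← pow_succ']⟩
  rcases le_total n n₀ with hn | hn
  · exact f.range_pow_le_range_pow hn ⟨z, rfl⟩
  · obtain ⟨w, hw⟩ := f.hyperrange_le_range_pow (n + 1) hy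
    have hdiff : (f ^ n) w - (f ^ n₀) z ∈ LinearMap.ker f ⊓ LinearMap.range (f ^ n₀) := by
      refine Submodule.mem_inf.mpr ⟨?_, Submodule.sub_mem _
        (f.range_pow_le_range_pow hn ⟨w, rfl⟩) ⟨z, rfl⟩⟩
      rw [LinearMap.mem_ker, map_sub, ← Module.End.mul_apply, ← Module.End.mul_apply, ← pow_succ',
        ← pow_succ', hw, sub_self]
    rw [← hn₀ n hn] at hdiff
    simpa using Submodule.sub_mem _ (LinearMap.mem_range_self _ w) (Submodule.mem_inf.mp hdiff).2

end Module.End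

section Banach
variable {𝕜 E F : Type*} [NontriviallyNormedField 𝕜]
  [NormedAddCommGroup E] [NormedSpace 𝕜 E] [NormedAddCommGroup F] [NormedSpace 𝕜 F]

theorem ContinuousLinearMap.isClosed_range_of_finiteDimensional_quotient [CompleteSpace 𝕜]
    [CompleteSpace E] [CompleteSpace F] (S : E →L[𝕜] F)
    [FiniteDimensional 𝕜 (F ⧸ LinearMap.range (S : E →ₗ[𝕜] F))] :
    IsClosed ((LinearMap.range (S : E →ₗ[𝕜] F) : Submodule 𝕜 F) : Set F) := by
  let K := ker (S : E →ₗ[𝕜] F)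
  have : IsClosed (K : Set E) := S.isClosed_ker
  obtain ⟨G, hG⟩ := (LinearMap.range (S : E →ₗ[𝕜] F)).exists_isCompl
  have : FiniteDimensional 𝕜 G := (Submodule.quotientEquivOfIsCompl _ G hG).finiteDimensional
  let S' : E ⧸ K →L[𝕜] F := K.liftQL S le_rfl
  have hrange : LinearMap.range (S' : E ⧸ K →ₗ[𝕜] F) = LinearMap.range (S : E →ₗ[𝕜] F) :=
    Submodule.range_liftQ _ _ _
  rw [← hrange] at hG ⊢
  exact S'.closed_complemented_range_of_isCompl_of_ker_eq_bot G hG G.closed_of_finiteDimensional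
    (Submodule.ker_liftQ_eq_bot _ _ _ le_rfl)

theorem ContinuousLinearMap.isClosed_range_pow_of_finiteDimensional_quotient [CompleteSpace 𝕜]
    [CompleteSpace E] (S : E →L[𝕜] E)
    [FiniteDimensional 𝕜 (E ⧸ LinearMap.range (S : E →ₗ[𝕜] E))] (n : ℕ) :
    IsClosed ((LinearMap.range ((S ^ n : E →L[𝕜] E) : E →ₗ[𝕜] E) : Submodule 𝕜 E) : Set E) := by
  have := Module.End.finite_quotient_range_pow (S : E →ₗ[𝕜] E) n
  rw [← ContinuousLinearMap.toLinearMap_pow] at this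
  exact (S ^ n).isClosed_range_of_finiteDimensional_quotient

theorem ContinuousLinearMap.exists_backward_orbit [CompleteSpace E] (S : E →L[𝕜] E)
    (hS : Function.Surjective S) :
    ∃ C > 0, ∀ x : E, ∃ u : ℕ → E, u 0 = x ∧ (∀ n, S (u (n + 1)) = u n) ∧
      ∀ n, ‖u n‖ ≤ C ^ n * ‖x‖ := by
  obtain ⟨C, hC, hpre⟩ := S.exists_preimage_norm_le hS
  choose g hSg hg using hpre
  refine ⟨C, hC, fun x => ⟨fun n => g^[n] x, rfl, fun n => ?_, fun n => ?_⟩⟩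
  · dsimp only
    rw [Function.iterate_succ_apply', hSg]
  · induction n with
    | zero => simp
    | succ n ih =>
      dsimp only at ih ⊢
      rw [Function.iterate_succ_apply', pow_succ', mul_assoc]
      exact (hg _).trans (mul_le_mul_of_nonneg_left ih hC.le)

end Banach

theorem ContinuousLinearMap.apply_tsum_pow_smul_of_backward_orbit {𝕜 E : Type*} [NormedField 𝕜]
    [NormedAddCommGroup E] [NormedSpace 𝕜 E] (S : E →L[𝕜] E) {u : ℕ → E} (h0 : S (u 0) = 0)
    (hsucc : ∀ n, S (u (n + 1)) = u n) {z : 𝕜} (hz : Summable fun n => z ^ n • u n) :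
    S (∑' n, z ^ n • u n) = z • ∑' n, z ^ n • u n := by
  have hS : Summable fun n => S (z ^ n • u n) := hz.mapL S
  rw [S.map_tsum hz, hS.tsum_eq_zero_add]
  simp only [map_smul, h0, hsucc, smul_zero, zero_add, pow_succ', mul_smul]
  exact hz.tsum_const_smul z

section HahnBanach
variable {𝕜 E F G : Type*} [RCLike 𝕜] [NormedAddCommGroup E] [NormedSpace 𝕜 E]
  [NormedAddCommGroup F] [NormedSpace 𝕜 F] [NormedAddCommGroup G] [NormedSpace 𝕜 G]

theorem ContinuousLinearMap.range_le_range_of_comp_eq_zero (A : E →L[𝕜] F) (B : G →L[𝕜] F)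
    (hB : IsClosed ((LinearMap.range (B : G →ₗ[𝕜] F) : Submodule 𝕜 F) : Set F))
    (h : ∀ g : StrongDual 𝕜 F, g.comp B = 0 → g.comp A = 0) :
    LinearMap.range (A : E →ₗ[𝕜] F) ≤ LinearMap.range (B : G →ₗ[𝕜] F) := by
  set P := LinearMap.range (B : G →ₗ[𝕜] F)
  have : IsClosed (P : Set F) := hB
  rintro _ ⟨x, rfl⟩
  by_contra hx
  rw [← Submodule.Quotient.mk_eq_zero] at hx
  obtain ⟨g, hg⟩ := SeparatingDual.exists_ne_zero (R := 𝕜) hx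
  refine hg (DFunLike.congr_fun (h (g.comp P.mkQL) ?_) x)
  ext y
  change g (P.mkQ (B y)) = 0
  have hy : B y ∈ P := ⟨y, rfl⟩
  rw [P.mkQ_apply, (Submodule.Quotient.mk_eq_zero P).mpr hy, map_zero]

theorem ContinuousLinearMap.exists_comp_eq_of_ker_le [CompleteSpace E] [CompleteSpace F]
    (S : E →L[𝕜] F) (hS : IsClosed ((LinearMap.range (S : E →ₗ[𝕜] F) : Submodule 𝕜 F) : Set F))
    (h : StrongDual 𝕜 E) (hker : ker (S : E →ₗ[𝕜] F) ≤ ker (h : E →ₗ[𝕜] 𝕜)) :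
    ∃ g : StrongDual 𝕜 F, g.comp S = h := by
  set M := LinearMap.range (S : E →ₗ[𝕜] F)
  set K := ker (S : E →ₗ[𝕜] F)
  have : CompleteSpace M := hS.completeSpace_coe
  have : IsClosed (K : Set E) := S.isClosed_ker
  let S₁ : E →L[𝕜] M := S.codRestrict M (LinearMap.mem_range_self _)
  have hker₁ : ker (S₁ : E →ₗ[𝕜] M) = K := S.ker_codRestrict M _
  let e : (E ⧸ K) ≃L[𝕜] M := .ofBijective (K.liftQL S₁ hker₁.ge)
    (Submodule.ker_liftQ_eq_bot _ _ _ hker₁.le) (by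
      rw [Submodule.toLinearMap_liftQL, Submodule.range_liftQ]
      exact LinearMap.range_eq_top.mpr fun ⟨_, x, hx⟩ => ⟨x, Subtype.ext hx⟩)
  obtain ⟨g, hg, -⟩ :=
    exists_extension_norm_eq M ((K.liftQL h hker).comp e.symm.toContinuousLinearMap)
  refine ⟨g, ContinuousLinearMap.ext fun x => ?_⟩
  have hx : e.symm (S₁ x) = K.mkQ x := e.symm_apply_eq.mpr rfl
  exact (by simpa [hx] using hg (S₁ x) : g (S₁ x : F) = h x)

end HahnBanach

theorem HasSVEPAt.eq_zero_of_backward_orbit [CompleteSpace X] {T : X →L[ℂ] X} {l : ℂ}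
    (hT : HasSVEPAt T l) {u : ℕ → X} {C : ℝ} (hC : 0 < C) (h0 : (T - l • 1) (u 0) = 0)
    (hsucc : ∀ n, (T - l • 1) (u (n + 1)) = u n) (hbound : ∀ n, ‖u n‖ ≤ C ^ n * ‖u 0‖) :
    u 0 = 0 := by
  let p : FormalMultilinearSeries ℂ ℂ X :=
    fun n => ContinuousMultilinearMap.mkPiRing ℂ (Fin n) (u n)
  have hp : ∀ n z, p n (fun _ => z) = z ^ n • u n := fun n z => by
    simp [p, ContinuousMultilinearMap.mkPiRing_apply]
  have hradius : 0 < p.radius := by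
    refine lt_of_lt_of_le ?_ (p.le_radius_of_bound ‖u 0‖ (r := C.toNNReal⁻¹) fun n => ?_)
    · simpa using hC
    · rw [ContinuousMultilinearMap.norm_mkPiRing, NNReal.coe_inv, Real.coe_toNNReal _ hC.le,
        inv_pow]
      calc ‖u n‖ * (C ^ n)⁻¹ ≤ C ^ n * ‖u 0‖ * (C ^ n)⁻¹ := by gcongr; exact hbound n
        _ = ‖u 0‖ := by field_simp
  let U := (fun μ => μ - l) ⁻¹' Metric.eball 0 p.radius
  have hU : IsOpen U := Metric.isOpen_eball.preimage (continuous_sub_right l)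
  have hlU : l ∈ U := by simpa [U] using hradius
  have hf : AnalyticOnNhd ℂ (fun μ => p.sum (μ - l)) U :=
    (p.hasFPowerSeriesOnBall hradius).analyticOnNhd.comp
      (fun _ _ => analyticAt_id.sub analyticAt_const) (mapsTo_preimage _ _)
  have := hT U hU hlU _ hf (fun μ hμ => ?_) l hlU
  · rwa [sub_self, ← (p.hasFPowerSeriesOnBall hradius).coeff_zero (fun _ => 0), hp, pow_zero,
      one_smul] at this
  have hsum : Summable fun n => (μ - l) ^ n • u n := by
    simpa [hp] using (p.summable_norm_apply hμ).of_norm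
  have hTμ : T - μ • 1 = (T - l • 1) - (μ - l) • 1 := by rw [sub_smul]; abel
  rw [hTμ, sub_apply, FormalMultilinearSeries.sum]
  simp only [hp, ContinuousLinearMap.apply_tsum_pow_smul_of_backward_orbit _ h0 hsucc hsum,
    smul_apply, one_apply_eq_self, sub_self]

theorem finiteAscent_of_hasSVEPAt [CompleteSpace X] {T : X →L[ℂ] X} {l : ℂ}
    [FiniteDimensional ℂ (ker ((T - l • 1 : X →L[ℂ] X) : X →ₗ[ℂ] X))]
    [FiniteDimensional ℂ (X ⧸ LinearMap.range ((T - l • 1 : X →L[ℂ] X) : X →ₗ[ℂ] X))]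
    (hT : HasSVEPAt T l) : FiniteAscent (T - l • 1) := by
  set S := T - l • 1
  set f : Module.End ℂ X := (S : X →ₗ[ℂ] X)
  by_contra hasc
  have hne : ∀ n, LinearMap.ker (f ^ (n + 1)) ≠ LinearMap.ker (f ^ n) := fun n h =>
    hasc ⟨n, by simpa only [ContinuousLinearMap.toLinearMap_pow] using h.symm⟩
  obtain ⟨x₀, hx₀, hx₀ne⟩ := (Submodule.ne_bot_iff _).mp (f.ker_inf_hyperrange_ne_bot hne)
  have hclosed : IsClosed (f.hyperrange : Set X) := by
    rw [Module.End.hyperrange, Submodule.coe_iInf]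
    refine isClosed_iInter fun n => ?_
    simpa only [ContinuousLinearMap.toLinearMap_pow] using
      S.isClosed_range_pow_of_finiteDimensional_quotient n
  have : CompleteSpace f.hyperrange := hclosed.completeSpace_coe
  let S' : f.hyperrange →L[ℂ] f.hyperrange :=
    (S.comp f.hyperrange.subtypeL).codRestrict _ fun x => f.apply_mem_hyperrange x.2
  have hS' : Function.Surjective S' := by
    rintro ⟨y, hy⟩
    obtain ⟨x, hx, rfl⟩ := f.hyperrange_le_map_hyperrange hy
    exact ⟨⟨x, hx⟩, rfl⟩
  obtain ⟨C, hC, horbit⟩ := S'.exists_backward_orbit hS'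
  obtain ⟨u, hu0, hsucc, hbound⟩ := horbit ⟨x₀, (Submodule.mem_inf.mp hx₀).2⟩
  have hx₀u : (u 0 : X) = x₀ := by rw [hu0]
  refine hx₀ne (hx₀u ▸ hT.eq_zero_of_backward_orbit (u := fun n => (u n : X)) hC ?_
    (fun n => congrArg Subtype.val (hsucc n)) fun n => hu0 ▸ hbound n)
  exact hx₀u ▸ (Submodule.mem_inf.mp hx₀).1

theorem dualOp_sub_smul_one (T : X →L[ℂ] X) (l : ℂ) :
    dualOp (T - l • 1) = dualOp T - l • 1 := by
  ext g x
  change g ((T - l • 1) x) = g (T x) - l • g x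
  rw [sub_apply, map_sub, smul_apply, map_smul, one_apply_eq_self]

set_option synthInstance.maxHeartbeats 400000 in
theorem dualOp_pow (S : X →L[ℂ] X) (n : ℕ) : dualOp (S ^ n) = dualOp S ^ n := by
  induction n with
  | zero => rfl
  | succ n ih => rw [pow_succ, pow_succ', ← ih]; rfl

theorem mem_ker_dualOp {S : X →L[ℂ] X} {g : StrongDual ℂ X} :
    g ∈ ker (dualOp S : StrongDual ℂ X →ₗ[ℂ] StrongDual ℂ X) ↔ g.comp S = 0 := Iff.rfl

theorem finiteDimensional_ker_dualOp (S : X →L[ℂ] X)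
    [FiniteDimensional ℂ (X ⧸ LinearMap.range (S : X →ₗ[ℂ] X))] :
    FiniteDimensional ℂ (ker (dualOp S : StrongDual ℂ X →ₗ[ℂ] StrongDual ℂ X)) := by
  let ι := LinearMap.codRestrict (LinearMap.range (S : X →ₗ[ℂ] X)).dualAnnihilator
    (ContinuousLinearMap.coeLM ℂ ∘ₗ Submodule.subtype _) fun g => by
      rw [Submodule.mem_dualAnnihilator]
      rintro _ ⟨x, rfl⟩
      exact DFunLike.congr_fun (mem_ker_dualOp.mp g.2) x
  have : FiniteDimensional ℂ (LinearMap.range (S : X →ₗ[ℂ] X)).dualAnnihilator :=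
    (Submodule.dualQuotEquivDualAnnihilator _).finiteDimensional
  exact Module.Finite.of_injective ι fun g g' h =>
    Subtype.ext (ContinuousLinearMap.coe_injective (congrArg Subtype.val h))

theorem finiteDimensional_quotient_range_dualOp [CompleteSpace X] (S : X →L[ℂ] X)
    (hS : IsClosed ((LinearMap.range (S : X →ₗ[ℂ] X) : Submodule ℂ X) : Set X))
    [FiniteDimensional ℂ (ker (S : X →ₗ[ℂ] X))] :
    FiniteDimensional ℂ
      (StrongDual ℂ X ⧸ LinearMap.range (dualOp S : StrongDual ℂ X →ₗ[ℂ] StrongDual ℂ X)) := by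
  let ρ := (ker (S : X →ₗ[ℂ] X)).subtype.dualMap ∘ₗ ContinuousLinearMap.coeLM ℂ
  have hρ : ker ρ ≤ LinearMap.range (dualOp S : StrongDual ℂ X →ₗ[ℂ] StrongDual ℂ X) := by
    intro g hg
    obtain ⟨g', hg'⟩ := S.exists_comp_eq_of_ker_le hS g fun x hx =>
      LinearMap.mem_ker.mpr (DFunLike.congr_fun (LinearMap.mem_ker.mp hg) ⟨x, hx⟩)
    exact ⟨g', hg'⟩
  have : FiniteDimensional ℂ (StrongDual ℂ X ⧸ ker ρ) :=
    ρ.quotKerEquivRange.symm.finiteDimensional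
  exact Module.Finite.of_surjective _ (Submodule.factor_surjective hρ)

theorem finiteDescent_of_finiteAscent_dualOp (S : X →L[ℂ] X)
    (hS : ∀ n, IsClosed
      ((LinearMap.range ((S ^ n : X →L[ℂ] X) : X →ₗ[ℂ] X) : Submodule ℂ X) : Set X))
    (h : FiniteAscent (dualOp S)) : FiniteDescent S := by
  obtain ⟨n, hn⟩ := h
  refine ⟨n, le_antisymm
    ((S ^ n).range_le_range_of_comp_eq_zero _ (hS (n + 1)) fun g hg => ?_) ?_⟩
  · rw [← dualOp_pow, ← dualOp_pow] at hn
    exact mem_ker_dualOp.mp (hn ▸ mem_ker_dualOp.mpr hg)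
  · simp only [ContinuousLinearMap.toLinearMap_pow]
    exact Module.End.range_pow_le_range_pow _ n.le_succ

/-- If `T` and its dual `T*` both have the SVEP at every point outside the
essential spectrum, then `σₑ(T) = σ_b(T)`. -/
theorem stmt_13 [CompleteSpace X] (T : X →L[ℂ] X)
    (h : ∀ l : ℂ, l ∉ essSpec T → HasSVEPAt T l ∧ HasSVEPAt (dualOp T) l) :
    essSpec T = browderSpec T := by
  ext l
  refine ⟨fun hl hb => hl hb.1, fun hb => ?_⟩
  by_contra hl
  obtain ⟨hT, hT'⟩ := h l hl
  have hF : IsFredholmOp (T - l • 1) := not_not.mp hl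
  have ⟨hker, hclosed, hcoker⟩ := hF
  have hdual : FiniteAscent (dualOp (T - l • 1)) := by
    have hker' := finiteDimensional_ker_dualOp (T - l • 1)
    have hcoker' := finiteDimensional_quotient_range_dualOp (T - l • 1) hclosed
    rw [dualOp_sub_smul_one] at hker' hcoker' ⊢
    exact finiteAscent_of_hasSVEPAt hT'
  exact hb ⟨hF, finiteAscent_of_hasSVEPAt hT, finiteDescent_of_finiteAscent_dualOp _
    (T - l • 1).isClosed_range_pow_of_finiteDimensional_quotient hdual⟩
end

section
/- Let S and T be bounded operators on Banach spaces with σₑ(S) = σ_b(S) and σₑ(T) = σ_b(T). Then the direct sum satisfies σₑ(S ⊕ T) = σ_b(S ⊕ T). -/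
open Filter Set
open LinearMap (ker)

variable {X Y : Type*} [NormedAddCommGroup X] [NormedSpace ℂ X]
  [NormedAddCommGroup Y] [NormedSpace ℂ Y]

/-! Everything is componentwise on `X × Y`: kernels and ranges of powers of `S ⊕ T - l` are
products of those of `S - l` and `T - l`, and closedness, finite dimension and finite codimension
of a product split into the two factors. Hence `σₑ` and `σ_b` both turn direct sums into unions.
Since `ker A^(n+1) = A⁻¹(ker A^n)` and `range A^(n+1) = A(range A^n)`, a chain of kernels or
ranges of powers is constant from its first repetition on, so finite ascent (descent) of both
summands gives it for the sum at the larger of the two indices. -/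

theorem isClosed_prod_iff_of_nonempty {α β : Type*} [TopologicalSpace α] [TopologicalSpace β]
    {s : Set α} {t : Set β} (hs : s.Nonempty) (ht : t.Nonempty) :
    IsClosed (s ×ˢ t) ↔ IsClosed s ∧ IsClosed t := by
  simp only [← closure_subset_iff_isClosed, closure_prod_eq,
    prod_subset_prod_iff' (hs.closure.prod ht.closure)]

theorem eventually_eq_succ_iff_exists {α : Type*} {u : ℕ → α} (g : α → α)
    (hu : ∀ n, u (n + 1) = g (u n)) :
    (∀ᶠ n in atTop, u n = u (n + 1)) ↔ ∃ n, u n = u (n + 1) := by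
  refine ⟨Eventually.exists, fun ⟨n, hn⟩ ↦ eventually_atTop.2 ⟨n, fun m hm ↦ ?_⟩⟩
  induction m, hm using Nat.le_induction with
  | base => exact hn
  | succ m _ ih => exact (hu m).trans ((congrArg g ih).trans (hu (m + 1)).symm)

section

variable {R M N : Type*} [Ring R] [AddCommGroup M] [Module R M] [AddCommGroup N] [Module R N]

def Submodule.prodEquiv (p : Submodule R M) (q : Submodule R N) : p.prod q ≃ₗ[R] p × q where
  toFun z := (⟨z.1.1, z.2.1⟩, ⟨z.1.2, z.2.2⟩)
  invFun z := ⟨(z.1.1, z.2.1), ⟨z.1.2, z.2.2⟩⟩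
  left_inv _ := rfl
  right_inv _ := rfl
  map_add' _ _ := rfl
  map_smul' _ _ := rfl

noncomputable def Submodule.quotientProdEquiv (p : Submodule R M) (q : Submodule R N) :
    ((M × N) ⧸ p.prod q) ≃ₗ[R] (M ⧸ p) × (N ⧸ q) :=
  (Submodule.quotEquivOfEq _ _ (by rw [LinearMap.ker_prodMap, p.ker_mkQ, q.ker_mkQ])).trans
    ((p.mkQ.prodMap q.mkQ).quotKerEquivOfSurjective
      (p.mkQ_surjective.prodMap q.mkQ_surjective))

theorem Submodule.prod_eq_prod_iff {p p' : Submodule R M} {q q' : Submodule R N} :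
    p.prod q = p'.prod q' ↔ p = p' ∧ q = q' := by
  simp only [← SetLike.coe_set_eq, Submodule.prod_coe,
    Set.prod_eq_prod_iff_of_nonempty ⟨0, (p.prod q).zero_mem⟩]

theorem Module.finite_prod_iff :
    Module.Finite R (M × N) ↔ Module.Finite R M ∧ Module.Finite R N :=
  ⟨fun _ ↦ ⟨.of_surjective (LinearMap.fst R M N) Prod.fst_surjective,
      .of_surjective (LinearMap.snd R M N) Prod.snd_surjective⟩,
    fun ⟨_, _⟩ ↦ inferInstance⟩

theorem Submodule.finite_prod_iff (p : Submodule R M) (q : Submodule R N) :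
    Module.Finite R (p.prod q) ↔ Module.Finite R p ∧ Module.Finite R q := by
  rw [Module.Finite.equiv_iff (p.prodEquiv q), Module.finite_prod_iff]

theorem Submodule.finite_quotient_prod_iff (p : Submodule R M) (q : Submodule R N) :
    Module.Finite R ((M × N) ⧸ p.prod q) ↔ Module.Finite R (M ⧸ p) ∧ Module.Finite R (N ⧸ q) := by
  rw [Module.Finite.equiv_iff (p.quotientProdEquiv q), Module.finite_prod_iff]

theorem LinearMap.prodMap_pow (f : Module.End R M) (g : Module.End R N) (n : ℕ) :
    f.prodMap g ^ n = (f ^ n).prodMap (g ^ n) :=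
  (map_pow (prodMapRingHom R M N) (f, g) n).symm

theorem LinearMap.ker_pow_succ_eq_comap (f : Module.End R M) (n : ℕ) :
    LinearMap.ker (f ^ (n + 1)) = (LinearMap.ker (f ^ n)).comap f := by
  rw [pow_succ, Module.End.mul_eq_comp, LinearMap.ker_comp]

theorem LinearMap.range_pow_succ_eq_map (f : Module.End R M) (n : ℕ) :
    LinearMap.range (f ^ (n + 1)) = (LinearMap.range (f ^ n)).map f := by
  rw [pow_succ', Module.End.mul_eq_comp, LinearMap.range_comp]

end

theorem ContinuousLinearMap.prodMap_sub_smul_one (A : X →L[ℂ] X) (B : Y →L[ℂ] Y) (l : ℂ) :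
    A.prodMap B - l • 1 = (A - l • 1).prodMap (B - l • 1) := by
  ext <;> simp

theorem isFredholmOp_prodMap_iff (A : X →L[ℂ] X) (B : Y →L[ℂ] Y) :
    IsFredholmOp (A.prodMap B) ↔ IsFredholmOp A ∧ IsFredholmOp B := by
  have hker : LinearMap.ker (A.prodMap B : X × Y →ₗ[ℂ] X × Y) =
      (LinearMap.ker (A : X →ₗ[ℂ] X)).prod (LinearMap.ker (B : Y →ₗ[ℂ] Y)) := by
    rw [ContinuousLinearMap.coe_prodMap, LinearMap.ker_prodMap]
  have hrange : LinearMap.range (A.prodMap B : X × Y →ₗ[ℂ] X × Y) =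
      (LinearMap.range (A : X →ₗ[ℂ] X)).prod (LinearMap.range (B : Y →ₗ[ℂ] Y)) := by
    rw [ContinuousLinearMap.coe_prodMap, LinearMap.range_prodMap]
  unfold IsFredholmOp FiniteDimensional
  rw [hker, hrange, Submodule.prod_coe,
    isClosed_prod_iff_of_nonempty ⟨0, zero_mem _⟩ ⟨0, zero_mem _⟩, Submodule.finite_prod_iff,
    Submodule.finite_quotient_prod_iff]
  tauto

theorem finiteAscent_iff_eventually (A : X →L[ℂ] X) :
    FiniteAscent A ↔ ∀ᶠ n in atTop,
      LinearMap.ker ((A : X →ₗ[ℂ] X) ^ n) = LinearMap.ker ((A : X →ₗ[ℂ] X) ^ (n + 1)) := by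
  simp only [FiniteAscent, ContinuousLinearMap.toLinearMap_pow]
  exact (eventually_eq_succ_iff_exists _ (LinearMap.ker_pow_succ_eq_comap _)).symm

theorem finiteDescent_iff_eventually (A : X →L[ℂ] X) :
    FiniteDescent A ↔ ∀ᶠ n in atTop,
      LinearMap.range ((A : X →ₗ[ℂ] X) ^ n) = LinearMap.range ((A : X →ₗ[ℂ] X) ^ (n + 1)) := by
  simp only [FiniteDescent, ContinuousLinearMap.toLinearMap_pow]
  exact (eventually_eq_succ_iff_exists _ (LinearMap.range_pow_succ_eq_map _)).symm

theorem finiteAscent_prodMap_iff (A : X →L[ℂ] X) (B : Y →L[ℂ] Y) :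
    FiniteAscent (A.prodMap B) ↔ FiniteAscent A ∧ FiniteAscent B := by
  simp only [finiteAscent_iff_eventually, ContinuousLinearMap.coe_prodMap, LinearMap.prodMap_pow,
    LinearMap.ker_prodMap, Submodule.prod_eq_prod_iff, eventually_and]

theorem finiteDescent_prodMap_iff (A : X →L[ℂ] X) (B : Y →L[ℂ] Y) :
    FiniteDescent (A.prodMap B) ↔ FiniteDescent A ∧ FiniteDescent B := by
  simp only [finiteDescent_iff_eventually, ContinuousLinearMap.coe_prodMap, LinearMap.prodMap_pow,
    LinearMap.range_prodMap, Submodule.prod_eq_prod_iff, eventually_and]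

theorem essSpec_prodMap (S : X →L[ℂ] X) (T : Y →L[ℂ] Y) :
    essSpec (S.prodMap T) = essSpec S ∪ essSpec T := by
  ext l
  simp only [essSpec, mem_ofPred_eq, mem_union, ContinuousLinearMap.prodMap_sub_smul_one,
    isFredholmOp_prodMap_iff, not_and_or]

theorem browderSpec_prodMap (S : X →L[ℂ] X) (T : Y →L[ℂ] Y) :
    browderSpec (S.prodMap T) = browderSpec S ∪ browderSpec T := by
  ext l
  simp only [browderSpec, mem_ofPred_eq, mem_union, ContinuousLinearMap.prodMap_sub_smul_one,
    isFredholmOp_prodMap_iff, finiteAscent_prodMap_iff, finiteDescent_prodMap_iff,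
    and_and_and_comm, not_and_or]

theorem stmt_15_general
    (S : X →L[ℂ] X) (T : Y →L[ℂ] Y)
    (hS : essSpec S = browderSpec S) (hT : essSpec T = browderSpec T) :
    essSpec (S.prodMap T) = browderSpec (S.prodMap T) := by
  rw [essSpec_prodMap, browderSpec_prodMap, hS, hT]

/-- If `σₑ(S) = σ_b(S)` and `σₑ(T) = σ_b(T)`, then the direct sum satisfies
`σₑ(S ⊕ T) = σ_b(S ⊕ T)`. -/
theorem stmt_15 [CompleteSpace X] [CompleteSpace Y]
    (S : X →L[ℂ] X) (T : Y →L[ℂ] Y)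
    (hS : essSpec S = browderSpec S) (hT : essSpec T = browderSpec T) :
    essSpec (S.prodMap T) = browderSpec (S.prodMap T) :=
  stmt_15_general S T hS hT
end
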